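/- Let a = 2cos(π/8). Then β = 184a³ + 340a² − 108a − 199 satisfies β > 1 and is a Pisot number. -/

import Mathlib

/-- A Pisot number: a real algebraic integer `β > 1` all of whose Galois conjugates
(the other complex roots of its minimal polynomial over `ℚ`) have modulus `< 1`. -/
def IsPisot (β : ℝ) : Prop :=
  1 < β ∧ IsIntegral ℤ β ∧
    ∀ z : ℂ, z ≠ (β : ℂ) → Polynomial.aeval z (minpoly ℚ β) = 0 → ‖z‖ < 1

/-- `a = 2 cos (π/8)`. -/
noncomputable def a8 : ℝ := 2 * Real.cos (Real.pi / 8)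

/-! The conjugates of `a = √(2 + √2)` are `±√(2 ± √2)`, so with
`f = 184 X³ + 340 X² - 108 X - 199` the conjugates of `β = f a` are among the four real numbers
`f (±√(2 ± √2))`, the roots of a monic integer quartic. For `x² = 2 ± √2` both `f x + f (-x)` and
`f x * f (-x)` lie in `ℤ[√2]`, and they locate the other three roots:
`f (-a) = (577 + 408 √2) / β ∈ (0, 1)`, while `f (±√(2 - √2))` are positive with
sum `962 - 680 √2 < 1`. -/

open Polynomial

theorem isPisot_of_monic {β : ℝ} {p : ℤ[X]} (hp : p.Monic) (hroot : aeval β p = 0) (hβ : 1 < β)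
    (hconj : ∀ z : ℂ, aeval z p = 0 → z ≠ β → ‖z‖ < 1) : IsPisot β := by
  refine ⟨hβ, ⟨p, hp, hroot⟩, fun z hne hz => hconj z ?_ hne⟩
  have hdvd : minpoly ℚ β ∣ p.map (algebraMap ℤ ℚ) :=
    minpoly.dvd ℚ β (by rwa [aeval_map_algebraMap])
  rw [← aeval_map_algebraMap ℚ]
  exact aeval_eq_zero_of_dvd_aeval_eq_zero hdvd hz

theorem mem_Ioo_zero_one_of_mul_pos_of_add_lt_one {α : Type*} [CommRing α] [LinearOrder α]
    [IsStrictOrderedRing α] {x y : α} (hmul : 0 < x * y)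
    (hadd : 0 < x + y) (hlt : x + y < 1) : x ∈ Set.Ioo 0 1 := by
  rcases pos_and_pos_or_neg_and_neg_of_mul_pos hmul with ⟨hx, hy⟩ | ⟨hx, hy⟩
  · exact ⟨hx, by linarith⟩
  · linarith

section CommRing

variable {R : Type*} [CommRing R]

def pisotCubic (x : R) : R := 184 * x ^ 3 + 340 * x ^ 2 - 108 * x - 199

variable {s x : R}

theorem pisotCubic_eq_of_sq (hx : x ^ 2 = 2 + s) :
    pisotCubic x = 481 + 340 * s + (260 + 184 * s) * x := by
  unfold pisotCubic; linear_combination (184 * x + 340) * hx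

theorem pisotCubic_add_pisotCubic_neg (hx : x ^ 2 = 2 + s) :
    pisotCubic x + pisotCubic (-x) = 962 + 680 * s := by
  unfold pisotCubic; linear_combination 680 * hx

theorem pisotCubic_mul_pisotCubic_neg (hs : s ^ 2 = 2) (hx : x ^ 2 = 2 + s) :
    pisotCubic x * pisotCubic (-x) = 577 + 408 * s := by
  rw [pisotCubic_eq_of_sq hx, pisotCubic_eq_of_sq (x := -x) (by rw [neg_sq, hx])]
  linear_combination (-(260 + 184 * s) ^ 2) * hx + (-33856 * s - 47792) * hs

noncomputable def pisotQuartic : ℤ[X] := X ^ 4 - C 1924 * X ^ 3 + C 1798 * X ^ 2 - C 388 * X + 1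

theorem pisotQuartic_monic : pisotQuartic.Monic := by
  unfold pisotQuartic; monicity!

theorem aeval_pisotQuartic (z : R) :
    aeval z pisotQuartic = z ^ 4 - 1924 * z ^ 3 + 1798 * z ^ 2 - 388 * z + 1 := by
  simp [pisotQuartic, map_ofNat]

theorem aeval_pisotQuartic_eq_mul (hs : s ^ 2 = 2) (z : R) :
    aeval z pisotQuartic =
      (z ^ 2 - (962 + 680 * s) * z + (577 + 408 * s)) *
        (z ^ 2 - (962 - 680 * s) * z + (577 - 408 * s)) := by
  rw [aeval_pisotQuartic]; linear_combination (462400 * z ^ 2 - 554880 * z + 166464) * hs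

/-- `±x, ±y` are the four roots of `X⁴ - 4X² + 2`. -/
theorem aeval_pisotQuartic_eq_prod {y : R} (hs : s ^ 2 = 2)
    (hx : x ^ 2 = 2 + s) (hy : y ^ 2 = 2 - s) (z : R) :
    aeval z pisotQuartic = (z - pisotCubic x) * (z - pisotCubic (-x)) *
      ((z - pisotCubic y) * (z - pisotCubic (-y))) := by
  have hy' : y ^ 2 = 2 + -s := by rw [hy, sub_eq_add_neg]
  have hs' : (-s) ^ 2 = 2 := by rw [neg_sq, hs]
  have quadratic (t w : R) : (z - t) * (z - w) = z ^ 2 - (t + w) * z + t * w := by ring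
  rw [quadratic, quadratic, pisotCubic_add_pisotCubic_neg hx, pisotCubic_mul_pisotCubic_neg hs hx,
    pisotCubic_add_pisotCubic_neg hy', pisotCubic_mul_pisotCubic_neg hs' hy',
    aeval_pisotQuartic_eq_mul hs]
  ring

end CommRing

open Real

theorem Complex.ofReal_pisotCubic (x : ℝ) : ((pisotCubic x : ℝ) : ℂ) = pisotCubic (x : ℂ) := by
  unfold pisotCubic; push_cast; rfl

-- Just enough for `577 - 408 √2 > 0` and `962 - 680 √2 < 1`.
theorem sqrt_two_mem_Ioo : √2 ∈ Set.Ioo (961 / 680) (577 / 408) :=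
  ⟨(lt_sqrt (by norm_num)).2 (by norm_num), (sqrt_lt' (by norm_num)).2 (by norm_num)⟩

theorem a8_eq_sqrt : a8 = √(2 + √2) := by
  rw [a8, cos_pi_div_eight]; ring

theorem a8_sq : a8 ^ 2 = 2 + √2 := by
  rw [a8_eq_sqrt, sq_sqrt (by positivity)]

theorem sqrt_two_sub_sqrt_two_sq : √(2 - √2) ^ 2 = 2 - √2 :=
  sq_sqrt (by linarith [sqrt_two_mem_Ioo.2])

theorem one_lt_a8 : 1 < a8 := by
  rw [a8_eq_sqrt, lt_sqrt zero_le_one]; linarith [sqrt_two_mem_Ioo.1]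

theorem one_lt_pisotCubic_a8 : 1 < pisotCubic a8 := by
  rw [pisotCubic_eq_of_sq a8_sq]
  nlinarith [sqrt_nonneg 2, one_lt_a8]

theorem pisotCubic_neg_a8_mem_Ioo : pisotCubic (-a8) ∈ Set.Ioo 0 1 := by
  have hprod := pisotCubic_mul_pisotCubic_neg (sq_sqrt zero_le_two) a8_sq
  have hlt : 577 + 408 * √2 < pisotCubic a8 := by
    rw [pisotCubic_eq_of_sq a8_sq]; nlinarith [sqrt_nonneg 2, one_lt_a8]
  have hβ : 0 ≤ pisotCubic a8 := zero_le_one.trans one_lt_pisotCubic_a8.le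
  exact ⟨pos_of_mul_pos_right (by rw [hprod]; positivity) hβ,
    lt_of_mul_lt_mul_left (by rwa [hprod, mul_one]) hβ⟩

theorem pisotCubic_mem_Ioo_of_sq_eq {y : ℝ} (hy : y ^ 2 = 2 - √2) :
    pisotCubic y ∈ Set.Ioo 0 1 := by
  have hy' : y ^ 2 = 2 + -√2 := by rw [hy, sub_eq_add_neg]
  have hs : (-√2) ^ 2 = 2 := by rw [neg_sq, sq_sqrt zero_le_two]
  obtain ⟨hlo, hhi⟩ := sqrt_two_mem_Ioo
  refine mem_Ioo_zero_one_of_mul_pos_of_add_lt_one (y := pisotCubic (-y)) ?_ ?_ ?_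
  · rw [pisotCubic_mul_pisotCubic_neg hs hy']; linarith
  · rw [pisotCubic_add_pisotCubic_neg hy']; linarith
  · rw [pisotCubic_add_pisotCubic_neg hy']; linarith

theorem eq_of_aeval_pisotQuartic_eq_zero {z : ℂ} (hz : aeval z pisotQuartic = 0) :
    z = pisotCubic a8 ∨ z = pisotCubic (-a8) ∨
      z = pisotCubic (√(2 - √2)) ∨ z = pisotCubic (-√(2 - √2)) := by
  have hs : ((√2 : ℝ) : ℂ) ^ 2 = 2 := by exact_mod_cast sq_sqrt zero_le_two
  have hx : ((a8 : ℝ) : ℂ) ^ 2 = 2 + (√2 : ℝ) := by exact_mod_cast a8_sq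
  have hy : ((√(2 - √2) : ℝ) : ℂ) ^ 2 = 2 - (√2 : ℝ) := by
    exact_mod_cast sqrt_two_sub_sqrt_two_sq
  rw [aeval_pisotQuartic_eq_prod hs hx hy] at hz
  simpa only [mul_eq_zero, sub_eq_zero, ← Complex.ofReal_neg, ← Complex.ofReal_pisotCubic,
    or_assoc] using hz

theorem stmt_17 :
    1 < 184 * a8 ^ 3 + 340 * a8 ^ 2 - 108 * a8 - 199 ∧
    IsPisot (184 * a8 ^ 3 + 340 * a8 ^ 2 - 108 * a8 - 199) := by
  change 1 < pisotCubic a8 ∧ IsPisot (pisotCubic a8)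
  have hroot : aeval (pisotCubic a8) pisotQuartic = 0 := by
    rw [aeval_pisotQuartic_eq_prod (sq_sqrt zero_le_two) a8_sq sqrt_two_sub_sqrt_two_sq,
      sub_self, zero_mul, zero_mul]
  have norm_lt_one {b : ℝ} (hb : b ∈ Set.Ioo 0 1) : ‖(b : ℂ)‖ < 1 := by
    rw [Complex.norm_real, norm_of_nonneg hb.1.le]; exact hb.2
  refine ⟨one_lt_pisotCubic_a8,
    isPisot_of_monic pisotQuartic_monic hroot one_lt_pisotCubic_a8 fun z hz hne => ?_⟩
  rcases eq_of_aeval_pisotQuartic_eq_zero hz with rfl | rfl | rfl | rfl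
  · exact absurd rfl hne
  · exact norm_lt_one pisotCubic_neg_a8_mem_Ioo
  · exact norm_lt_one (pisotCubic_mem_Ioo_of_sq_eq sqrt_two_sub_sqrt_two_sq)
  · exact norm_lt_one (pisotCubic_mem_Ioo_of_sq_eq (by rw [neg_sq, sqrt_two_sub_sqrt_two_sq]))
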